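/- A single large swap strictly outperforms two consecutive smaller swaps: if φ < 1, then for x, y > 0 and reserves r0, r1 > 0, the output of swapping x+y at once exceeds the total output of swapping x followed by y: (x+y)·SX(x+y, r0, r1) > x·α + y·β, where α = SX(x, r0, r1) and β = SX(y, r0+x, r1−α·x). -/

import Mathlib

/-! After the first swap the output reserve is `r1 - α x = r0 r1 / (r0 + φ x)`, so the loss from
splitting the swap is the explicit fraction
`φ r0 r1 (1 - φ) x y / ((r0 + φ (x + y)) (r0 + φ x) (r0 + x + φ y))`.
The factor `1 - φ` appears because the first swap credits the pool with all of `x` but prices it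
at only `φ x`; with positive data every factor is positive. -/

noncomputable def swapRate (φ x r0 r1 : ℝ) : ℝ := φ * r1 / (r0 + φ * x)

lemma sub_swapRate_mul {φ x r0 r1 : ℝ} (h : r0 + φ * x ≠ 0) :
    r1 - swapRate φ x r0 r1 * x = r0 * r1 / (r0 + φ * x) := by
  unfold swapRate
  field_simp
  ring

lemma swapRate_after_swap {φ x y r0 r1 : ℝ} (h : r0 + φ * x ≠ 0) :
    swapRate φ y (r0 + x) (r1 - swapRate φ x r0 r1 * x) =
      φ * r0 * r1 / ((r0 + φ * x) * (r0 + x + φ * y)) := by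
  rw [sub_swapRate_mul h, swapRate, mul_div_assoc', div_div, mul_assoc]

lemma swapRate_add_sub_split {φ x y r0 r1 : ℝ} (hxy : r0 + φ * (x + y) ≠ 0)
    (hx : r0 + φ * x ≠ 0) (hy : r0 + x + φ * y ≠ 0) :
    (x + y) * swapRate φ (x + y) r0 r1 -
        (x * swapRate φ x r0 r1 + y * swapRate φ y (r0 + x) (r1 - swapRate φ x r0 r1 * x)) =
      φ * r0 * r1 * (1 - φ) * x * y /
        ((r0 + φ * (x + y)) * (r0 + φ * x) * (r0 + x + φ * y)) := by
  have hxhy := mul_ne_zero hx hy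
  rw [swapRate_after_swap hx, swapRate, swapRate, mul_div_assoc', mul_div_assoc', mul_div_assoc',
    div_add_div _ _ hx hxhy, div_sub_div _ _ hxy (mul_ne_zero hx hxhy),
    div_eq_div_iff (mul_ne_zero hxy (mul_ne_zero hx hxhy)) (mul_ne_zero (mul_ne_zero hxy hx) hy)]
  ring

theorem stmt9 (φ x y r0 r1 : ℝ) (hφ0 : 0 < φ) (hφ1 : φ < 1)
    (hx : 0 < x) (hy : 0 < y) (hr0 : 0 < r0) (hr1 : 0 < r1) :
    let α := φ * r1 / (r0 + φ * x)
    let β := φ * (r1 - α * x) / ((r0 + x) + φ * y)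
    (x + y) * (φ * r1 / (r0 + φ * (x + y))) > x * α + y * β := by
  show x * swapRate φ x r0 r1 + y * swapRate φ y (r0 + x) (r1 - swapRate φ x r0 r1 * x) <
    (x + y) * swapRate φ (x + y) r0 r1
  rw [← sub_pos, swapRate_add_sub_split (by positivity) (by positivity) (by positivity)]
  have : 0 < 1 - φ := sub_pos.2 hφ1
  positivity
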